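/- Let $g: [-r, 0] \to \mathbb{R}$ be continuously differentiable, $f_2: \mathbb{R}^n \to \mathbb{R}$ continuous, and define for a continuous path $\phi: [-r,0] \to \mathbb{R}^n$ the functional $V(\phi) = \int_{-r}^{0} g(t) f_2(\phi(t))\,dt$. For $h \in (0, r)$ let $\phi_h(s) = \phi(s+h)$ for $s \in [-r, -h]$ and $\phi_h(s) = \phi(0)$ for $s \in [-h, 0]$. Then the horizontal derivative $\lim_{h \to 0^+} \frac{V(\phi_h) - V(\phi)}{h}$ exists and equals $g(0) f_2(\phi(0)) - g(-r) f_2(\phi(-r)) - \int_{-r}^{0} f_2(\phi(t)) g'(t)\,dt$. -/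

import Mathlib

open Filter intervalIntegral

/-- Horizontal (Dupire) derivative of the integral functional
`V(φ) = ∫_{-r}^0 g(t) f₂(φ(t)) dt`: as `h → 0⁺`,
`(V(φ_h) - V(φ))/h → g(0)f₂(φ(0)) - g(-r)f₂(φ(-r)) - ∫_{-r}^0 f₂(φ(t)) g'(t) dt`. -/
theorem stmt12 {n : ℕ} (r : ℝ) (hr : 0 < r)
    (g : ℝ → ℝ) (hg : ContDiff ℝ 1 g)
    (f₂ : (Fin n → ℝ) → ℝ) (hf₂ : Continuous f₂)
    (φ : ℝ → (Fin n → ℝ)) (hφ : Continuous φ) :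
    Tendsto
      (fun h : ℝ =>
        ((∫ t in (-r)..0, g t * f₂ (if t ≤ -h then φ (t + h) else φ 0)) -
            ∫ t in (-r)..0, g t * f₂ (φ t)) / h)
      (nhdsWithin 0 (Set.Ioi 0))
      (nhds (g 0 * f₂ (φ 0) - g (-r) * f₂ (φ (-r)) -
        ∫ t in (-r)..0, f₂ (φ t) * deriv g t)) := by
  have hK : Continuous (fun t => f₂ (φ t)) := hf₂.comp hφ
  have hgc : Continuous g := hg.continuous
  have hg' : Continuous (deriv g) := hg.continuous_deriv le_rfl
  have hgd : Differentiable ℝ g := hg.differentiable one_ne_zero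
  set A : ℝ → ℝ := fun h => ∫ t in (-r)..0, g (t - h) * f₂ (φ t) with hAdef
  set B : ℝ → ℝ := fun h => ∫ t in (-r)..(-r + h), g (t - h) * f₂ (φ t) with hBdef
  -- Derivative of the parametric integral A at 0
  have hA : HasDerivAt A (-∫ t in (-r)..0, f₂ (φ t) * deriv g t) 0 := by
    obtain ⟨M, hM⟩ := (isCompact_Icc (a := -r - 1) (b := (1:ℝ))).exists_bound_of_continuousOn
      hg'.continuousOn
    obtain ⟨C, hC⟩ := (isCompact_Icc (a := -r) (b := (0:ℝ))).exists_bound_of_continuousOn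
      hK.continuousOn
    have hM0 : 0 ≤ M := le_trans (norm_nonneg _) (hM 0 (by constructor <;> [linarith; norm_num]))
    have hC0 : 0 ≤ C := le_trans (norm_nonneg _) (hC 0 (by constructor <;> [linarith; norm_num]))
    have key := intervalIntegral.hasDerivAt_integral_of_dominated_loc_of_deriv_le
      (F := fun x t => g (t - x) * f₂ (φ t)) (F' := fun x t => -(deriv g (t - x)) * f₂ (φ t))
      (x₀ := (0:ℝ)) (a := -r) (b := 0) (bound := fun _ => M * C) (μ := MeasureTheory.volume)
      (Metric.ball_mem_nhds _ one_pos)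
      (Filter.Eventually.of_forall fun x =>
        Continuous.aestronglyMeasurable (by fun_prop))
      (Continuous.intervalIntegrable (by fun_prop) _ _)
      (Continuous.aestronglyMeasurable (by fun_prop))
      ?_ intervalIntegrable_const ?_
    · have h2 := key.2
      have heq : (∫ t in (-r)..0, -(deriv g (t - 0)) * f₂ (φ t))
          = -∫ t in (-r)..0, f₂ (φ t) * deriv g t := by
        rw [← intervalIntegral.integral_neg]
        congr 1; funext t; ring_nf
      rwa [heq] at h2
    · refine Filter.Eventually.of_forall fun t ht x hx => ?_
      rw [Set.uIoc_of_le (by linarith)] at ht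
      rw [Metric.mem_ball, Real.dist_eq, sub_zero] at hx
      have habs := abs_lt.mp hx
      have h1 : t - x ∈ Set.Icc (-r - 1) 1 := by
        constructor <;> [nlinarith [ht.1, ht.2]; nlinarith [ht.1, ht.2]]
      have h2 : t ∈ Set.Icc (-r) 0 := ⟨le_of_lt ht.1, ht.2⟩
      calc ‖-(deriv g (t - x)) * f₂ (φ t)‖ = ‖deriv g (t - x)‖ * ‖f₂ (φ t)‖ := by
            rw [norm_mul, norm_neg]
        _ ≤ M * C := mul_le_mul (hM _ h1) (hC _ h2) (norm_nonneg _) hM0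
    · refine Filter.Eventually.of_forall fun t ht x hx => ?_
      have h1 : HasDerivAt (fun x => g (t - x)) (-(deriv g (t - x))) x := by
        have := ((hgd (t - x)).hasDerivAt).comp x ((hasDerivAt_id x).const_sub t)
        simp only [mul_neg, mul_one] at this
        exact this
      simpa using h1.mul_const (f₂ (φ t))
  -- T1
  have T1 : Tendsto (fun h => (A h - A 0) / h) (nhdsWithin 0 (Set.Ioi 0))
      (nhds (-∫ t in (-r)..0, f₂ (φ t) * deriv g t)) := by
    have := hasDerivAt_iff_tendsto_slope.mp hA
    have h2 := this.mono_left (nhdsWithin_mono 0 (fun x hx => ne_of_gt hx))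
    refine h2.congr fun h => ?_
    simp [slope_def_field, div_eq_inv_mul]
  -- T2
  have T2 : Tendsto (fun h => B h / h) (nhdsWithin 0 (Set.Ioi 0))
      (nhds (g (-r) * f₂ (φ (-r)))) := by
    rw [Metric.tendsto_nhdsWithin_nhds]
    intro ε hε
    have hQ : Continuous (fun p : ℝ × ℝ => g (p.1 - p.2) * f₂ (φ p.1)) :=
      (hgc.comp (continuous_fst.sub continuous_snd)).mul (hK.comp continuous_fst)
    have hQc : ContinuousAt (fun p : ℝ × ℝ => g (p.1 - p.2) * f₂ (φ p.1)) (-r, 0) :=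
      hQ.continuousAt
    rw [Metric.continuousAt_iff] at hQc
    obtain ⟨δ, hδ, hδ'⟩ := hQc (ε / 2) (by linarith)
    refine ⟨min (δ / 2) r, by positivity, fun {h} hh hd => ?_⟩
    rw [Set.mem_Ioi] at hh
    rw [Real.dist_eq, sub_zero, abs_of_pos hh] at hd
    have hhr : h < r := lt_of_lt_of_le hd (min_le_right _ _)
    have hhδ : h < δ / 2 := lt_of_lt_of_le hd (min_le_left _ _)
    have hcont : Continuous (fun t => g (t - h) * f₂ (φ t)) :=
      (hgc.comp (continuous_id.sub continuous_const)).mul hK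
    have hsub : B h - h * (g (-r) * f₂ (φ (-r)))
        = ∫ t in (-r)..(-r + h), (g (t - h) * f₂ (φ t) - g (-r) * f₂ (φ (-r))) := by
      rw [intervalIntegral.integral_sub (hcont.intervalIntegrable _ _) intervalIntegrable_const,
        intervalIntegral.integral_const]
      simp only [hBdef, smul_eq_mul]
      ring
    have hbd : ‖∫ t in (-r)..(-r + h), (g (t - h) * f₂ (φ t) - g (-r) * f₂ (φ (-r)))‖
        ≤ (ε / 2) * |(-r + h) - (-r)| := by
      apply intervalIntegral.norm_integral_le_of_norm_le_const
      intro t ht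
      rw [Set.uIoc_of_le (by linarith)] at ht
      have hdist : dist ((t, h) : ℝ × ℝ) (-r, 0) < δ := by
        rw [Prod.dist_eq]
        apply max_lt
        · rw [Real.dist_eq]
          have : |t - (-r)| ≤ h := by
            rw [abs_le]; constructor <;> [linarith [ht.1]; linarith [ht.2]]
          linarith
        · rw [Real.dist_eq, sub_zero, abs_of_pos hh]; linarith
      simpa [Real.dist_eq, Real.norm_eq_abs] using le_of_lt (hδ' hdist)
    have habs : |(-r + h) - (-r)| = h := by rw [abs_of_pos (by linarith)]; ring_nf
    rw [Real.dist_eq]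
    have heq : B h / h - g (-r) * f₂ (φ (-r)) = (B h - h * (g (-r) * f₂ (φ (-r)))) / h := by
      field_simp
    rw [heq, hsub, abs_div, abs_of_pos hh]
    have h1 : |∫ t in (-r)..(-r + h), (g (t - h) * f₂ (φ t) - g (-r) * f₂ (φ (-r)))|
        ≤ ε / 2 * h := by
      rw [← Real.norm_eq_abs]
      calc ‖∫ t in (-r)..(-r + h), (g (t - h) * f₂ (φ t) - g (-r) * f₂ (φ (-r)))‖
          ≤ (ε / 2) * |(-r + h) - (-r)| := hbd
        _ = ε / 2 * h := by rw [habs]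
    calc |∫ t in (-r)..(-r + h), (g (t - h) * f₂ (φ t) - g (-r) * f₂ (φ (-r)))| / h
        ≤ (ε / 2 * h) / h := by gcongr
      _ = ε / 2 := by field_simp
      _ < ε := by linarith
  -- T3
  have T3 : Tendsto (fun h => (∫ t in (-h)..(0:ℝ), g t) / h) (nhdsWithin 0 (Set.Ioi 0))
      (nhds (g 0)) := by
    have hI : HasDerivAt (fun u => ∫ t in (0:ℝ)..u, g t) (g 0) 0 :=
      (hgc.integral_hasStrictDerivAt 0 0).hasDerivAt
    have hs := hasDerivAt_iff_tendsto_slope.mp hI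
    have hneg : Tendsto (fun h : ℝ => -h) (nhdsWithin 0 (Set.Ioi 0))
        (nhdsWithin 0 {x : ℝ | x ≠ 0}) := by
      apply tendsto_nhdsWithin_of_tendsto_nhds_of_eventually_within
      · simpa using (continuous_neg.tendsto (0:ℝ)).mono_left nhdsWithin_le_nhds
      · filter_upwards [self_mem_nhdsWithin] with h hh
        exact ne_of_lt (neg_neg_of_pos hh)
    have hcomp := hs.comp hneg
    refine hcomp.congr fun h => ?_
    simp only [Function.comp, slope_def_field]
    rw [intervalIntegral.integral_same, intervalIntegral.integral_symm]
    rw [sub_zero, sub_zero, neg_div_neg_eq]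
  -- Splitting identity
  have key : ∀ h ∈ Set.Ioo (0:ℝ) r,
      ((∫ t in (-r)..0, g t * f₂ (if t ≤ -h then φ (t + h) else φ 0)) -
          ∫ t in (-r)..0, g t * f₂ (φ t)) / h
        = (A h - A 0) / h - B h / h + f₂ (φ 0) * ((∫ t in (-h)..(0:ℝ), g t) / h) := by
    intro h hh
    obtain ⟨hh0, hhr⟩ := hh
    have hcont : Continuous (fun t => g t * f₂ (φ (t + h))) :=
      hgc.mul (hK.comp (continuous_id.add continuous_const))
    have hcont2 : Continuous (fun t => g (t - h) * f₂ (φ t)) :=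
      (hgc.comp (continuous_id.sub continuous_const)).mul hK
    -- integrability of the if-integrand on the two subintervals
    have i1 : IntervalIntegrable (fun t => g t * f₂ (if t ≤ -h then φ (t + h) else φ 0))
        MeasureTheory.volume (-r) (-h) := by
      rw [intervalIntegrable_iff_integrableOn_Ioc_of_le (by linarith)]
      refine (hcont.integrableOn_Ioc).congr_fun (fun t ht => ?_) measurableSet_Ioc
      rw [if_pos ht.2]
    have i2 : IntervalIntegrable (fun t => g t * f₂ (if t ≤ -h then φ (t + h) else φ 0))
        MeasureTheory.volume (-h) 0 := by
      rw [intervalIntegrable_iff_integrableOn_Ioc_of_le (by linarith)]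
      have hcc : Continuous (fun t : ℝ => g t * f₂ (φ 0)) := hgc.mul continuous_const
      refine hcc.integrableOn_Ioc.congr_fun (fun t ht => ?_) measurableSet_Ioc
      show g t * f₂ (φ 0) = g t * f₂ (if t ≤ -h then φ (t + h) else φ 0)
      rw [if_neg (not_le.mpr ht.1)]
    have e1 : (∫ t in (-r)..(-h), g t * f₂ (if t ≤ -h then φ (t + h) else φ 0))
        = ∫ t in (-r)..(-h), g t * f₂ (φ (t + h)) := by
      apply intervalIntegral.integral_congr
      intro t ht
      rw [Set.uIcc_of_le (by linarith)] at ht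
      show g t * f₂ (if t ≤ -h then φ (t + h) else φ 0) = g t * f₂ (φ (t + h))
      rw [if_pos ht.2]
    have e2 : (∫ t in (-h)..0, g t * f₂ (if t ≤ -h then φ (t + h) else φ 0))
        = ∫ t in (-h)..0, g t * f₂ (φ 0) := by
      apply intervalIntegral.integral_congr_ae
      refine Filter.Eventually.of_forall fun t ht => ?_
      rw [Set.uIoc_of_le (by linarith)] at ht
      show g t * f₂ (if t ≤ -h then φ (t + h) else φ 0) = g t * f₂ (φ 0)
      rw [if_neg (not_le.mpr ht.1)]
    have split : (∫ t in (-r)..0, g t * f₂ (if t ≤ -h then φ (t + h) else φ 0))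
        = (∫ t in (-r)..(-h), g t * f₂ (φ (t + h))) + (∫ t in (-h)..0, g t) * f₂ (φ 0) := by
      rw [← intervalIntegral.integral_add_adjacent_intervals i1 i2, e1, e2,
        intervalIntegral.integral_mul_const]
    have chg : (∫ t in (-r)..(-h), g t * f₂ (φ (t + h)))
        = ∫ t in (-r + h)..0, g (t - h) * f₂ (φ t) := by
      have := intervalIntegral.integral_comp_add_right
        (a := -r) (b := -h) (fun t => g (t - h) * f₂ (φ t)) h
      simp only [add_sub_cancel_right, neg_add_cancel] at this
      rw [← this]
    have adj : B h + (∫ t in (-r + h)..0, g (t - h) * f₂ (φ t)) = A h := by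
      exact intervalIntegral.integral_add_adjacent_intervals
        (hcont2.intervalIntegrable _ _) (hcont2.intervalIntegrable _ _)
    have hA0 : A 0 = ∫ t in (-r)..0, g t * f₂ (φ t) := by
      simp [hAdef]
    rw [split, chg, hA0.symm]
    have hne : h ≠ 0 := ne_of_gt hh0
    have : (∫ t in (-r + h)..0, g (t - h) * f₂ (φ t)) = A h - B h := by linarith
    rw [this]
    field_simp
    ring
  -- Combine
  have comb := (T1.sub T2).add (T3.const_mul (f₂ (φ 0)))
  have heval : (-∫ t in (-r)..0, f₂ (φ t) * deriv g t) - g (-r) * f₂ (φ (-r))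
      + f₂ (φ 0) * g 0
      = g 0 * f₂ (φ 0) - g (-r) * f₂ (φ (-r)) - ∫ t in (-r)..0, f₂ (φ t) * deriv g t := by
    ring
  rw [heval] at comb
  refine Tendsto.congr' ?_ comb
  filter_upwards [Ioo_mem_nhdsGT_of_mem (Set.mem_Ico.mpr ⟨le_rfl, hr⟩)] with h hh
  exact (key h hh).symm
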